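/- arXiv:2403.15655 — 5 statements merged into one kernel-verified Lean document; each statement's English description precedes it below -/
import Mathlib

section
/- Let $d$ be a circular decomposable metric on $X = \{1,\dots,n\}$. For any $a \neq c$: $d(a,c-1) \leq d(a,c)$ if and only if $\modtwosum_{i=a+1}^{c} \alpha_{ic} \leq \modtwosum_{i=c+1}^{a} \alpha_{ic}$, where all index arithmetic is cyclic mod $n$. -/
open Finset

/-- Position of `b` relative to `a` in the clockwise cyclic order on `ZMod n`
(number of clockwise steps from `a` to `b`). -/
def cpos {n : ℕ} (a b : ZMod n) : ℕ := (b - a).val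

/-- `a ≺ b ≺ c` in the cyclic order. -/
def btwSS {n : ℕ} (a b c : ZMod n) : Prop := 0 < cpos a b ∧ cpos a b < cpos a c

/-- `a ≺ b ⪯ c` in the cyclic order. -/
def btwSW {n : ℕ} (a b c : ZMod n) : Prop := 0 < cpos a b ∧ cpos a b ≤ cpos a c

/-- `a ⪯ b ≺ c` in the cyclic order. -/
def btwWS {n : ℕ} (a b c : ZMod n) : Prop := cpos a b < cpos a c

/-- `a ⪯ b ⪯ c` in the cyclic order. -/
def btwWW {n : ℕ} (a b c : ZMod n) : Prop := cpos a b ≤ cpos a c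

/-- Circular sum `⊕∑_{i=a}^{b} f i`: the sum of `f` over the indices from `a` to `b`
inclusive, traversed cyclically (wrapping around mod `n`). -/
noncomputable def csum {n : ℕ} (f : ZMod n → ℝ) (a b : ZMod n) : ℝ :=
  ∑ k ∈ Finset.range ((b - a).val + 1), f (a + (k : ZMod n))

/-- The circular decomposable metric determined by isolation indices `α`:
`d a b = ⊕∑_{i=a+1}^{b} ⊕∑_{j=b+1}^{a} α i j` for `a ≠ b`, and `d a a = 0`. -/
noncomputable def dd {n : ℕ} (α : ZMod n → ZMod n → ℝ) (a b : ZMod n) : ℝ :=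
  if a = b then 0 else csum (fun i => csum (fun j => α i j) (b + 1) a) (a + 1) b

/-! Moving the endpoint of the split `{a+1, …, c-1} | {c, …, a}` one step, to
`{a+1, …, c} | {c+1, …, a}`, drops the pairs `(i, c)` with `i` strictly between `a` and `c` and
adds the pairs `(c, j)` with `j` in `{c+1, …, a}`. Hence `d(a,c) - d(a,c-1)` is
`⊕∑_{j=c+1}^{a} α c j - ⊕∑_{i=a+1}^{c-1} α i c`, which by symmetry and `α c c = 0` is the difference
of the two sums in the statement. -/

lemma ZMod.val_sub_one_add_one {n : ℕ} [NeZero n] {x : ZMod n} (hx : x ≠ 0) :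
    (x - 1).val + 1 = x.val := by
  have hpos : 0 < x.val := Nat.pos_of_ne_zero ((ZMod.val_ne_zero x).mpr hx)
  have hx' : x - 1 = ((x.val - 1 : ℕ) : ZMod n) := by
    rw [Nat.cast_sub hpos, ZMod.natCast_zmod_val, Nat.cast_one]
  rw [hx', ZMod.val_cast_of_lt (by have := ZMod.val_lt x; omega)]
  omega

section csum

variable {n : ℕ} (f : ZMod n → ℝ)

lemma csum_self (a : ZMod n) : csum f a a = f a := by
  simp [csum]

lemma csum_eq_add_csum_add_one [NeZero n] {a b : ZMod n} (hab : a ≠ b) :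
    csum f a b = f a + csum f (a + 1) b := by
  have hlen : (b - (a + 1)).val + 1 = (b - a).val := by
    rw [show b - (a + 1) = b - a - 1 by ring]
    exact ZMod.val_sub_one_add_one (sub_ne_zero.mpr hab.symm)
  rw [csum, csum, ← hlen, Finset.sum_range_succ', Nat.cast_zero, add_zero, add_comm]
  congr 1
  refine Finset.sum_congr rfl fun k _ => ?_
  push_cast
  ring_nf

lemma csum_eq_csum_sub_one_add [NeZero n] {a b : ZMod n} (hab : a ≠ b) :
    csum f a b = csum f a (b - 1) + f b := by
  have hlen : (b - 1 - a).val + 1 = (b - a).val := by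
    rw [show b - 1 - a = b - a - 1 by ring]
    exact ZMod.val_sub_one_add_one (sub_ne_zero.mpr hab.symm)
  rw [csum, csum, ← hlen, Finset.sum_range_succ]
  congr 2
  push_cast
  rw [ZMod.natCast_zmod_val]
  ring

lemma csum_add (g : ZMod n → ℝ) (a b : ZMod n) :
    csum (fun i => f i + g i) a b = csum f a b + csum g a b :=
  Finset.sum_add_distrib

lemma csum_congr {g : ZMod n → ℝ} (h : ∀ i, f i = g i) (a b : ZMod n) :
    csum f a b = csum g a b := by
  simp only [csum, h]

end csum

lemma dd_eq_dd_sub_one_add_sub {n : ℕ} [NeZero n] (α : ZMod n → ZMod n → ℝ)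
    (hsym : ∀ i j, α i j = α j i) (hdiag : ∀ i, α i i = 0) {a c : ZMod n} (hac : a ≠ c) :
    dd α a c = dd α a (c - 1) + csum (fun i => α i c) (c + 1) a
      - csum (fun i => α i c) (a + 1) c := by
  have hlast : csum (fun j => α c j) (c + 1) a = csum (fun i => α i c) (c + 1) a :=
    csum_congr _ (fun j => hsym c j) _ _
  by_cases hca : a = c - 1
  -- `dd α a a = 0` comes from the `if`: the cyclic sum from `a + 1` to `a` is the whole cycle.
  · have hc : a + 1 = c := by rw [hca]; ring
    simp only [dd, if_pos hca, if_neg hac, hc, csum_self, hdiag, hlast]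
    ring
  · have hc : a + 1 ≠ c := fun h => hca (by rw [← h]; ring)
    have hinner : ∀ i, csum (fun j => α i j) (c - 1 + 1) a
        = α i c + csum (fun j => α i j) (c + 1) a := fun i => by
      rw [sub_add_cancel, csum_eq_add_csum_add_one _ (Ne.symm hac)]
    simp only [dd, if_neg hca, if_neg hac, csum_congr _ hinner, csum_add]
    rw [csum_eq_csum_sub_one_add _ hc, csum_eq_csum_sub_one_add _ hc, hdiag, hlast]
    ring

theorem stmt4_general {n : ℕ} [NeZero n] (α : ZMod n → ZMod n → ℝ)
    (hsym : ∀ i j, α i j = α j i) (hdiag : ∀ i, α i i = 0)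
    (a c : ZMod n) (hac : a ≠ c) :
    dd α a (c - 1) ≤ dd α a c ↔
      csum (fun i => α i c) (a + 1) c ≤ csum (fun i => α i c) (c + 1) a := by
  rw [dd_eq_dd_sub_one_add_sub α hsym hdiag hac, add_sub_assoc, le_add_iff_nonneg_right,
    sub_nonneg]

/-- For `a ≠ c`: `d(a,c-1) ≤ d(a,c)` iff
`⊕∑_{i=a+1}^{c} α i c ≤ ⊕∑_{i=c+1}^{a} α i c`. -/
theorem stmt4 {n : ℕ} [NeZero n] (α : ZMod n → ZMod n → ℝ)
    (hnn : ∀ i j, 0 ≤ α i j) (hsym : ∀ i j, α i j = α j i) (hdiag : ∀ i, α i i = 0)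
    (a c : ZMod n) (hac : a ≠ c) :
    dd α a (c - 1) ≤ dd α a c ↔
      csum (fun i => α i c) (a + 1) c ≤ csum (fun i => α i c) (c + 1) a :=
  stmt4_general α hsym hdiag a c hac
end

section
/- Let $X$ be a cyclically ordered finite set and let $M: X \to X$ be defined from a function $\sigma$ by: $M(a)$ is the last element $m$ of the cyclic sequence $a+1,\dots,a-1$ with $\sigma(m) \prec a \prec m$. Then: (1) $a \prec b \prec M(a)$ implies $b \prec M(a) \preceq M(b)$; (2) $M(a) \prec b \prec a$ implies $M(b) \preceq M(a) \prec b$. -/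
open Finset

/-!
Measuring clockwise positions from a fixed base point turns cyclic betweenness into strict
inequalities of natural numbers. In (1), `σ(M a) ≺ a ≺ M a` and `a ≺ b ≺ M a` give
`σ(M a) ≺ b ≺ M a`, so if `M b` came strictly before `M a` as seen from `b`, then `M a` would be
a later candidate for `M b`. In (2), seen from `b`, a failure of the claim puts `a`, `M a`, `M b`,
`σ(M b)` in this clockwise order, which makes `M b` a later candidate for `M a`.
-/

lemma cpos_pos_iff {n : ℕ} {a b : ZMod n} : 0 < cpos a b ↔ a ≠ b := by
  rw [cpos, Nat.pos_iff_ne_zero, Ne, ZMod.val_eq_zero, sub_eq_zero, eq_comm]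

lemma btwSS.left_ne_mid {n : ℕ} {a b c : ZMod n} (h : btwSS a b c) : a ≠ b :=
  cpos_pos_iff.1 h.1

lemma btwSS.mid_ne_right {n : ℕ} {a b c : ZMod n} (h : btwSS a b c) : b ≠ c := by
  rintro rfl
  exact lt_irrefl _ h.2

section NeZero

variable {n : ℕ} [NeZero n] {o a b c : ZMod n}

lemma cpos_lt (a b : ZMod n) : cpos a b < n := ZMod.val_lt _

lemma cpos_add_cpos_of_le (h : cpos a b ≤ cpos a c) : cpos a b + cpos b c = cpos a c := by
  have hsplit : c - a = (b - a) + (c - b) := by ring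
  rcases lt_or_ge (cpos a b + cpos b c) n with hlt | hge
  · show (b - a).val + (c - b).val = (c - a).val
    rw [hsplit, ZMod.val_add_of_lt hlt]
  · have hwrap := ZMod.val_add_val_of_le hge
    rw [← hsplit] at hwrap
    have := cpos_lt b c
    unfold cpos at *
    omega

lemma cpos_add_cpos_swap (h : a ≠ b) : cpos a b + cpos b a = n := by
  have hba : b - a ≠ 0 := sub_ne_zero.2 h.symm
  have := ZMod.val_lt (b - a)
  rw [cpos, cpos, ← neg_sub b a, ZMod.neg_val, if_neg hba]
  omega

lemma btwSS_of_cpos_lt_of_cpos_lt (hab : cpos o a < cpos o b) (hbc : cpos o b < cpos o c) :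
    btwSS a b c := by
  have hb := cpos_add_cpos_of_le hab.le
  have hc := cpos_add_cpos_of_le (hab.trans hbc).le
  constructor <;> omega

lemma btwSS.rotate (h : btwSS a b c) : btwSS b c a := by
  have hac := cpos_add_cpos_of_le h.2.le
  have hba := cpos_add_cpos_swap h.left_ne_mid
  have := cpos_lt a c
  have := h.2
  constructor <;> omega

lemma btwSS_of_not_btwWS (hac : a ≠ c) (hbc : b ≠ c) (h : ¬ btwWS a b c) : btwSS a c b := by
  have hca := cpos_add_cpos_of_le (not_lt.1 h)
  have := cpos_pos_iff.2 hbc.symm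
  exact ⟨cpos_pos_iff.2 hac, by omega⟩

end NeZero

/-- For `M` defined from `σ` (the last `m` in the cyclic sequence `a+1, …, a-1` with
`σ(m) ≺ a ≺ m`): (1) `a ≺ b ≺ M(a)` implies `b ≺ M(a) ⪯ M(b)`;
(2) `M(a) ≺ b ≺ a` implies `M(b) ⪯ M(a) ≺ b`. -/
theorem stmt9 {n : ℕ} [NeZero n] (σ M : ZMod n → ZMod n)
    (hM : ∀ a : ZMod n, btwSS (σ (M a)) a (M a) ∧
      ∀ m : ZMod n, cpos a (M a) < cpos a m → ¬ btwSS (σ m) a m) :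
    (∀ a b : ZMod n, btwSS a b (M a) → btwSW b (M a) (M b)) ∧
    (∀ a b : ZMod n, btwSS (M a) b a → btwWS (M b) (M a) b) := by
  constructor
  · intro a b hab
    have hσ : btwSS (σ (M a)) b (M a) :=
      (btwSS_of_cpos_lt_of_cpos_lt hab.2 (hM a).1.rotate.2).rotate.rotate
    exact ⟨hab.rotate.1, not_lt.1 fun hlt => (hM b).2 (M a) hlt hσ⟩
  · intro a b hab
    by_contra hfail
    have hMb : btwSS b (M a) (M b) :=
      (btwSS_of_not_btwWS (hM b).1.mid_ne_right.symm hab.left_ne_mid hfail).rotate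
    have hσ := (hM b).1.rotate
    have hlater : btwSS a (M a) (M b) := btwSS_of_cpos_lt_of_cpos_lt hab.rotate.2 hMb.2
    have hcand : btwSS (σ (M b)) a (M b) :=
      (btwSS_of_cpos_lt_of_cpos_lt (hab.rotate.2.trans hMb.2) hσ.2).rotate.rotate
    exact (hM a).2 (M b) hlater.2 hcand
end

section
/- Let $E$ and $F$ be hyperconvex (injective) metric spaces. Then the metric gluing of $E$ and $F$ along a single point (metric wedge, with distance $d(e,f) = d_E(e,e_0) + d_F(f_0,f)$ for $e \in E$, $f \in F$ glued at $e_0 \sim f_0$) is hyperconvex. -/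
/-!
If every ball of a pairwise intersecting family contains the wedge point `z0`, then `z0` is a
common point. Otherwise some ball centred in, say, `E` misses `z0`; since distances from `E`
to the other side are measured through `z0`, each ball centred outside `E` then contains `z0`
with room to spare. Shrinking such a ball `B(f, r)` to `B(z0, r - d(f, z0))` gives a pairwise intersecting
family of balls of `E`, and a common point of those in `E` is a common point of the original
balls.
-/

universe u

/-- A metric space is hyperconvex if every family of pairwise-intersecting closed balls
(`dist (p i) (p j) ≤ r i + r j` with `r i > 0`) has a common point. -/
def Hyperconvex (E : Type u) [MetricSpace E] : Prop :=
  ∀ (ι : Type u) (p : ι → E) (r : ι → ℝ), (∀ i, 0 < r i) →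
    (∀ i j, dist (p i) (p j) ≤ r i + r j) → ∃ q : E, ∀ i, dist (p i) q ≤ r i

section Gate

variable {Z : Type u} {E : Set Z} {z0 : Z}

/-- The gate of `z` in `E`, when every point outside `E` reaches `E` through `z0`. -/
noncomputable def gateProj (E : Set Z) (z0 z : Z) : Z :=
  open Classical in if z ∈ E then z else z0

theorem gateProj_of_mem {z : Z} (hz : z ∈ E) : gateProj E z0 z = z := if_pos hz

theorem gateProj_of_notMem {z : Z} (hz : z ∉ E) : gateProj E z0 z = z0 := if_neg hz

theorem gateProj_mem (hz0 : z0 ∈ E) (z : Z) : gateProj E z0 z ∈ E := by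
  by_cases hz : z ∈ E
  · rwa [gateProj_of_mem hz]
  · rwa [gateProj_of_notMem hz]

variable [MetricSpace Z]

theorem dist_gateProj_add_dist_gateProj
    (hgate : ∀ e ∈ E, ∀ z ∉ E, dist z e = dist z z0 + dist z0 e) {z w : Z}
    (hzw : z ∈ E ∨ w ∈ E) :
    dist z (gateProj E z0 z) + dist (gateProj E z0 z) (gateProj E z0 w)
      + dist w (gateProj E z0 w) = dist z w := by
  by_cases hz : z ∈ E <;> by_cases hw : w ∈ E
  · simp [gateProj_of_mem hz, gateProj_of_mem hw]
  · rw [gateProj_of_mem hz, gateProj_of_notMem hw, dist_comm z w, hgate z hz w hw]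
    simp only [dist_self, dist_comm z0]
    ring
  · simp [gateProj_of_notMem hz, gateProj_of_mem hw, hgate w hw z hz]
  · tauto

theorem dist_lt_of_gate (hgate : ∀ e ∈ E, ∀ z ∉ E, dist z e = dist z z0 + dist z0 e)
    {ι : Type*} {p : ι → Z} {r : ι → ℝ} (hpair : ∀ i j, dist (p i) (p j) ≤ r i + r j)
    {i₀ : ι} (hi₀ : p i₀ ∈ E) (hmiss : r i₀ < dist (p i₀) z0) {i : ι} (hi : p i ∉ E) :
    dist (p i) z0 < r i := by
  have hglue := hgate (p i₀) hi₀ (p i) hi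
  have := hpair i i₀
  rw [dist_comm z0] at hglue
  linarith

theorem Hyperconvex.exists_common_point_of_gate (hE : Hyperconvex E) (hz0 : z0 ∈ E)
    (hgate : ∀ e ∈ E, ∀ z ∉ E, dist z e = dist z z0 + dist z0 e)
    {ι : Type u} {p : ι → Z} {r : ι → ℝ} (hr : ∀ i, 0 < r i)
    (hpair : ∀ i j, dist (p i) (p j) ≤ r i + r j)
    (hout : ∀ i, p i ∉ E → dist (p i) z0 < r i) :
    ∃ q : Z, ∀ i, dist (p i) q ≤ r i := by
  set π := gateProj E z0
  set s : ι → ℝ := fun i => r i - dist (p i) (π (p i))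
  have hs : ∀ i, 0 < s i := by
    intro i
    by_cases hi : p i ∈ E
    · simpa [s, π, gateProj_of_mem hi] using hr i
    · simpa [s, π, gateProj_of_notMem hi] using hout i hi
  have hspair : ∀ i j, dist (π (p i)) (π (p j)) ≤ s i + s j := by
    intro i j
    by_cases hij : p i ∈ E ∨ p j ∈ E
    · have : dist (p i) (π (p i)) + dist (π (p i)) (π (p j)) + dist (p j) (π (p j))
          = dist (p i) (p j) := dist_gateProj_add_dist_gateProj hgate hij
      linarith [hpair i j]
    · push Not at hij
      simp only [π, gateProj_of_notMem hij.1, gateProj_of_notMem hij.2, dist_self]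
      linarith [hs i, hs j]
  obtain ⟨q, hq⟩ := hE ι (fun i => ⟨π (p i), gateProj_mem hz0 _⟩) s hs hspair
  refine ⟨q, fun i => ?_⟩
  calc dist (p i) q ≤ dist (p i) (π (p i)) + dist (π (p i)) q := dist_triangle _ _ _
    _ ≤ dist (p i) (π (p i)) + s i := by gcongr; exact hq i
    _ = r i := by ring

end Gate

/-- The metric gluing (wedge) of two hyperconvex spaces along a point is hyperconvex:
if `Z = E ∪ F` with `E ∩ F = {z0}` and `dist e f = dist e z0 + dist z0 f` for
`e ∈ E`, `f ∈ F`, and both `E` and `F` are hyperconvex, then so is `Z`. -/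
theorem stmt14 {Z : Type u} [MetricSpace Z] (E F : Set Z) (z0 : Z)
    (hunion : E ∪ F = Set.univ) (hinter : E ∩ F = {z0})
    (hglue : ∀ e ∈ E, ∀ f ∈ F, dist e f = dist e z0 + dist z0 f)
    (hE : Hyperconvex ↥E) (hF : Hyperconvex ↥F) :
    Hyperconvex Z := by
  have hz0 : z0 ∈ E ∩ F := hinter ▸ rfl
  have hmem (z : Z) : z ∈ E ∨ z ∈ F := Set.eq_univ_iff_forall.mp hunion z
  have hgateE : ∀ e ∈ E, ∀ z ∉ E, dist z e = dist z z0 + dist z0 e := fun e he z hz => by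
    rw [dist_comm, hglue e he z ((hmem z).resolve_left hz), dist_comm e, dist_comm z0 z, add_comm]
  have hgateF : ∀ f ∈ F, ∀ z ∉ F, dist z f = dist z z0 + dist z0 f := fun f hf z hz =>
    hglue z ((hmem z).resolve_right hz) f hf
  intro ι p r hr hpair
  by_cases hmissE : ∃ i, p i ∈ E ∧ r i < dist (p i) z0
  · obtain ⟨i₀, hi₀, hmiss⟩ := hmissE
    exact hE.exists_common_point_of_gate hz0.1 hgateE hr hpair
      fun i hi => dist_lt_of_gate hgateE hpair hi₀ hmiss hi
  by_cases hmissF : ∃ i, p i ∈ F ∧ r i < dist (p i) z0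
  · obtain ⟨i₀, hi₀, hmiss⟩ := hmissF
    exact hF.exists_common_point_of_gate hz0.2 hgateF hr hpair
      fun i hi => dist_lt_of_gate hgateF hpair hi₀ hmiss hi
  push Not at hmissE hmissF
  exact ⟨z0, fun i => (hmem (p i)).elim (hmissE i) (hmissF i)⟩
end

section
/- Let $(X,d_X)$ and $(Y,d_Y)$ be metric spaces, $x_0 \in X$, $\ell \geq 0$, and $f: X \to Y$ a bijection with $d_Y(f(x),f(x')) = d_X(x,x')$ for $x,x' \neq x_0$, $d_Y(f(x),f(x_0)) = d_X(x,x_0)+\ell$ for $x \neq x_0$. Let $y_0 = f(x_0)$ and define $\gamma_t: Y \to \mathbb{R}$ for $t \in [0,\ell]$ by $\gamma_t(y_0) = t$ and $\gamma_t(y) = d_Y(y,y_0) - t$ for $y \neq y_0$. Then $\gamma_t$ lies in the tight span $T(Y,d_Y)$ for every $t \in [0,\ell]$, and $d_\infty(\gamma_t,\gamma_s) = |t-s|$. -/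
/-!
Away from `y₀` the function `γ_t` is `d(·, y₀) - t`, and the stretch hypothesis gives
`d(y, y') + 2ℓ ≤ d(y, y₀) + d(y', y₀)` for `y, y' ≠ y₀` (the triangle inequality through `x₀`
in `X`), which is exactly the room needed for `γ_t(y) + γ_t(y') ≥ d(y, y')` when `t ≤ ℓ`.
The supremum defining the tight span is then attained: at `y₀` for `y ≠ y₀`, and at any
other point for `y = y₀`.  Finally `γ_t - γ_s` is the constant `±(t - s)`.
-/

/-- The path `γ_t` in the tight span: `γ_t(y₀) = t` and `γ_t(y) = d(y,y₀) - t` otherwise. -/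
noncomputable def gammaPath {Y : Type*} [MetricSpace Y] [DecidableEq Y]
    (y0 : Y) (t : ℝ) : Y → ℝ :=
  fun y => if y = y0 then t else dist y y0 - t

section GammaPath

variable {Y : Type*} [MetricSpace Y] [DecidableEq Y] {y0 : Y}

@[simp]
theorem gammaPath_self (t : ℝ) : gammaPath y0 t y0 = t := if_pos rfl

theorem gammaPath_of_ne {y : Y} (t : ℝ) (hy : y ≠ y0) : gammaPath y0 t y = dist y y0 - t :=
  if_neg hy

theorem abs_gammaPath_sub_gammaPath (t s : ℝ) (y : Y) :
    |gammaPath y0 t y - gammaPath y0 s y| = |t - s| := by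
  by_cases hy : y = y0
  · simp [hy]
  · rw [gammaPath_of_ne t hy, gammaPath_of_ne s hy, ← abs_neg]
    ring_nf

theorem dist_le_gammaPath_add_gammaPath {t : ℝ} (ht : 0 ≤ t)
    (hfar : ∀ y y' : Y, y ≠ y0 → y' ≠ y0 → dist y y' + 2 * t ≤ dist y y0 + dist y' y0)
    (y y' : Y) : dist y y' ≤ gammaPath y0 t y + gammaPath y0 t y' := by
  rcases eq_or_ne y y0 with rfl | hy
  · rcases eq_or_ne y' y with rfl | hy'
    · simp; linarith
    · rw [gammaPath_of_ne t hy', gammaPath_self, dist_comm]; linarith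
  rcases eq_or_ne y' y0 with rfl | hy'
  · rw [gammaPath_of_ne t hy, gammaPath_self]; linarith
  rw [gammaPath_of_ne t hy, gammaPath_of_ne t hy']
  linarith [hfar y y' hy hy']

theorem isLUB_dist_sub_gammaPath [Nontrivial Y] {t : ℝ}
    (hle : ∀ y y' : Y, dist y y' ≤ gammaPath y0 t y + gammaPath y0 t y') (y : Y) :
    IsLUB (Set.range fun y' => dist y y' - gammaPath y0 t y') (gammaPath y0 t y) := by
  refine IsGreatest.isLUB ⟨?_, Set.forall_mem_range.2 fun y' => by linarith [hle y y']⟩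
  rcases eq_or_ne y y0 with rfl | hy
  · obtain ⟨y1, hy1⟩ := exists_ne y
    exact ⟨y1, by simp [gammaPath_of_ne t hy1, dist_comm]⟩
  · exact ⟨y0, by simp [gammaPath_of_ne t hy]⟩

end GammaPath

theorem dist_add_two_mul_le_of_stretch {X Y : Type*} [MetricSpace X] [MetricSpace Y]
    {x0 : X} {ℓ t : ℝ} {f : X → Y} (hf : Function.Surjective f)
    (hiso : ∀ x x' : X, x ≠ x0 → x' ≠ x0 → dist (f x) (f x') = dist x x')
    (hext : ∀ x : X, x ≠ x0 → dist (f x) (f x0) = dist x x0 + ℓ) (ht : t ≤ ℓ)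
    (y y' : Y) (hy : y ≠ f x0) (hy' : y' ≠ f x0) :
    dist y y' + 2 * t ≤ dist y (f x0) + dist y' (f x0) := by
  obtain ⟨x, rfl⟩ := hf y
  obtain ⟨x', rfl⟩ := hf y'
  have hx : x ≠ x0 := ne_of_apply_ne f hy
  have hx' : x' ≠ x0 := ne_of_apply_ne f hy'
  rw [hiso x x' hx hx', hext x hx, hext x' hx']
  linarith [dist_triangle_right x x' x0]

theorem stmt17_general {X Y : Type*} [MetricSpace X] [MetricSpace Y]
    [DecidableEq Y] [Nontrivial X]
    (x0 : X) (ℓ : ℝ) (f : X → Y) (hf : Function.Bijective f)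
    (hiso : ∀ x x' : X, x ≠ x0 → x' ≠ x0 → dist (f x) (f x') = dist x x')
    (hext : ∀ x : X, x ≠ x0 → dist (f x) (f x0) = dist x x0 + ℓ) :
    ∀ t ∈ Set.Icc (0 : ℝ) ℓ,
      ((∀ y y' : Y, dist y y' ≤ gammaPath (f x0) t y + gammaPath (f x0) t y') ∧
        (∀ y : Y, IsLUB (Set.range fun y' => dist y y' - gammaPath (f x0) t y')
          (gammaPath (f x0) t y))) ∧
      (∀ s ∈ Set.Icc (0 : ℝ) ℓ,
        IsLUB (Set.range fun y => |gammaPath (f x0) t y - gammaPath (f x0) s y|)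
          |t - s|) := by
  have : Nontrivial Y := hf.injective.nontrivial
  rintro t ⟨ht0, htℓ⟩
  have hle := dist_le_gammaPath_add_gammaPath ht0
    (dist_add_two_mul_le_of_stretch hf.surjective hiso hext htℓ)
  refine ⟨⟨hle, isLUB_dist_sub_gammaPath hle⟩, fun s _ => ?_⟩
  simp only [abs_gammaPath_sub_gammaPath, Set.range_const]
  exact isLUB_singleton

/-- Let `f : X → Y` be a bijection of finite metric spaces that is an isometry away from
`x₀` and stretches all distances to `x₀` by `ℓ ≥ 0`.  Then for every `t ∈ [0, ℓ]` the
function `γ_t` lies in the tight span `T(Y, d_Y)` (it satisfies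
`d(y,y') ≤ γ_t(y) + γ_t(y')` and `γ_t(y) = sup_{y'} (d(y,y') - γ_t(y'))`), and
`d_∞(γ_t, γ_s) = |t - s|` for `t, s ∈ [0, ℓ]`. -/
theorem stmt17 {X Y : Type*} [MetricSpace X] [MetricSpace Y]
    [Fintype X] [Fintype Y] [DecidableEq Y] [Nontrivial X]
    (x0 : X) (ℓ : ℝ) (hℓ : 0 ≤ ℓ) (f : X → Y) (hf : Function.Bijective f)
    (hiso : ∀ x x' : X, x ≠ x0 → x' ≠ x0 → dist (f x) (f x') = dist x x')
    (hext : ∀ x : X, x ≠ x0 → dist (f x) (f x0) = dist x x0 + ℓ) :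
    ∀ t ∈ Set.Icc (0 : ℝ) ℓ,
      ((∀ y y' : Y, dist y y' ≤ gammaPath (f x0) t y + gammaPath (f x0) t y') ∧
        (∀ y : Y, IsLUB (Set.range fun y' => dist y y' - gammaPath (f x0) t y')
          (gammaPath (f x0) t y))) ∧
      (∀ s ∈ Set.Icc (0 : ℝ) ℓ,
        IsLUB (Set.range fun y => |gammaPath (f x0) t y - gammaPath (f x0) s y|)
          |t - s|) :=
  stmt17_general x0 ℓ f hf hiso hext
end

section
/- Let $n = 2k$ and let $p_1, \dots, p_n \in S^1$ be points in clockwise cyclic order such that $p_{i+k}$ is antipodal to $p_i$ (indices mod $n$). Set $d_{ab} = d_{S^1}(p_a,p_b)$ (geodesic metric, circumference 1) and define $M(a) := a+k \pmod n$. Then $M$ witnesses that $d$ is a monotone metric: (1) if $a \preceq b \prec c \preceq M(a)$ in the cyclic order then $d_{b,c-1} < d_{bc}$ and $d_{b+1,c} \leq d_{bc}$; (2) if $M(a) \prec b \prec c \preceq a$ then $d_{b,c-1} < d_{bc}$ and $d_{b+1,c} \leq d_{bc}$; (3) $a \prec b \preceq M(a)$ implies $M(b) \preceq a \prec b$, and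 $M(b) \prec a \prec b$ implies $a \prec b \preceq M(a)$. -/
lemma distAC {x y : ℝ} (h0 : 0 ≤ y - x) (h1 : y - x ≤ 1/2) :
    dist (x : AddCircle (1:ℝ)) (y : AddCircle (1:ℝ)) = y - x := by
  rw [dist_eq_norm, ← AddCircle.coe_sub,
    (AddCircle.norm_coe_eq_abs_iff (1:ℝ) one_ne_zero).mpr (by rw [abs_one]; rw [abs_sub_comm, abs_of_nonneg h0]; linarith),
    abs_sub_comm, abs_of_nonneg h0]

lemma halfAC {x y : ℝ} (h0 : 0 < y - x) (h1 : y - x < 1)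
    (hd : dist (x : AddCircle (1:ℝ)) (y : AddCircle (1:ℝ)) = 1/2) : y - x = 1/2 := by
  rw [dist_eq_norm, ← AddCircle.coe_sub, AddCircle.norm_eq] at hd
  simp only [inv_one, one_mul, mul_one] at hd
  set r : ℤ := round (x - y) with hr
  rcases (abs_eq (by norm_num : (0:ℝ) ≤ 1/2)).mp hd with h | h
  · have h2 : (r:ℝ) < 0 := by linarith
    have h3 : (-2:ℝ) < r := by linarith
    have : r = -1 := by
      have h2' : r < 0 := by exact_mod_cast h2
      have h3' : -2 < r := by exact_mod_cast h3
      omega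
    rw [this] at h; push_cast at h; linarith
  · have h2 : (r:ℝ) < 1 := by linarith
    have h3 : (-1:ℝ) < r := by linarith
    have : r = 0 := by
      have h2' : r < 1 := by exact_mod_cast h2
      have h3' : -1 < r := by exact_mod_cast h3
      omega
    rw [this] at h; push_cast at h; linarith

/-- Lift of the point sequence to `[θ 0, θ 0 + 2)`. -/
noncomputable def gfun {n : ℕ} (θ : ZMod n → ℝ) (t : ℕ) : ℝ :=
  if t < n then θ ((t : ℕ) : ZMod n) else θ (((t - n : ℕ)) : ZMod n) + 1

section aux
variable {n : ℕ} [NeZero n] (θ : ZMod n → ℝ)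
  (hmono : ∀ i j : ZMod n, i.val < j.val → θ i < θ j)
  (hwin : ∀ i : ZMod n, θ i < θ 0 + 1)

include hmono in
lemma theta_mono_le : ∀ i j : ZMod n, i.val ≤ j.val → θ i ≤ θ j := by
  intro i j h
  rcases h.lt_or_eq with h | h
  · exact (hmono i j h).le
  · rw [ZMod.val_injective n h]

include hmono in
lemma theta_zero_le : ∀ i : ZMod n, θ 0 ≤ θ i := by
  intro i
  exact theta_mono_le θ hmono 0 i (by simp [ZMod.val_zero])

include hmono hwin in
lemma gmono : ∀ t s : ℕ, t < s → s < 2 * n → gfun θ t < gfun θ s := by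
  intro t s hts hs
  unfold gfun
  rcases lt_or_ge s n with h | h
  · rw [if_pos (hts.trans h), if_pos h]
    exact hmono _ _ (by rwa [ZMod.val_cast_of_lt (hts.trans h), ZMod.val_cast_of_lt h])
  · rcases lt_or_ge t n with h' | h'
    · rw [if_pos h', if_neg (not_lt.mpr h)]
      exact lt_of_lt_of_le (hwin _) (by linarith [theta_zero_le θ hmono (((s - n : ℕ)) : ZMod n)])
    · rw [if_neg (not_lt.mpr h'), if_neg (not_lt.mpr h)]
      have h1 : t - n < s - n := by omega
      have h2 : s - n < n := by omega
      have := hmono (((t - n : ℕ)) : ZMod n) (((s - n : ℕ)) : ZMod n)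
        (by rwa [ZMod.val_cast_of_lt (h1.trans h2), ZMod.val_cast_of_lt h2])
      linarith

include hmono hwin in
lemma gmono_le : ∀ t s : ℕ, t ≤ s → s < 2 * n → gfun θ t ≤ gfun θ s := by
  intro t s hts hs
  rcases hts.lt_or_eq with h | h
  · exact (gmono θ hmono hwin t s h hs).le
  · rw [h]

lemma gshift (t : ℕ) (ht : t < n) : gfun θ (t + n) = gfun θ t + 1 := by
  unfold gfun
  rw [if_neg (by omega), if_pos ht, Nat.add_sub_cancel]

end aux

section aux2
set_option linter.unusedSectionVars false
set_option maxHeartbeats 800000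
variable {n k : ℕ} [NeZero n] (hk : 0 < k) (hn : n = 2 * k)
  (p : ZMod n → AddCircle (1 : ℝ)) (θ : ZMod n → ℝ)
  (hlift : ∀ i : ZMod n, p i = (θ i : AddCircle (1 : ℝ)))
  (hmono : ∀ i j : ZMod n, i.val < j.val → θ i < θ j)
  (hwin : ∀ i : ZMod n, θ i < θ 0 + 1)
  (hant : ∀ i : ZMod n, dist (p i) (p (i + (k : ZMod n))) = 1 / 2)

include hk hn hlift hmono hwin hant in
lemma pg : ∀ t : ℕ, t < 2 * n → ((gfun θ t : ℝ) : AddCircle (1:ℝ)) = p ((t : ℕ) : ZMod n) := by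
  intro t ht
  unfold gfun
  rcases lt_or_ge t n with h | h
  · rw [if_pos h, hlift]
  · rw [if_neg (not_lt.mpr h), hlift, AddCircle.coe_add, AddCircle.coe_period, add_zero]
    have : ((t : ℕ) : ZMod n) = (((t - n : ℕ)) : ZMod n) := by
      conv_lhs => rw [show t = (t - n) + n by omega]
      push_cast [ZMod.natCast_self]
      ring
    rw [this]

include hk hn hlift hmono hwin hant in
lemma theta_half : ∀ i : ZMod n, i.val < k → θ (i + (k : ZMod n)) = θ i + 1/2 := by
  intro i hi
  have hkn : k < n := by omega
  have hval : (i + (k : ZMod n)).val = i.val + k := by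
    rw [ZMod.val_add_of_lt]
    · rw [ZMod.val_cast_of_lt hkn]
    · rw [ZMod.val_cast_of_lt hkn]; omega
  have h0 : θ i < θ (i + (k : ZMod n)) := hmono _ _ (by omega)
  have h1 : θ (i + (k : ZMod n)) - θ i < 1 := by
    have := hwin (i + (k : ZMod n)); have := theta_zero_le θ hmono i; linarith
  have hd := hant i
  rw [hlift, hlift] at hd
  have := halfAC (by linarith) h1 hd
  linarith

include hk hn hlift hmono hwin hant in
lemma ghalf : ∀ t : ℕ, t < n → gfun θ (t + k) = gfun θ t + 1/2 := by
  intro t ht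
  have hkn : k < n := by omega
  rcases lt_or_ge t k with h | h
  · have h1 : t + k < n := by omega
    have := theta_half hk hn p θ hlift hmono hwin hant ((t : ℕ) : ZMod n)
      (by rwa [ZMod.val_cast_of_lt (by omega)])
    unfold gfun
    rw [if_pos h1, if_pos ht]
    rw [show (((t + k : ℕ)) : ZMod n) = ((t:ℕ) : ZMod n) + (k : ZMod n) by push_cast; ring]
    exact this
  · have h1 : t - k < k := by omega
    have := theta_half hk hn p θ hlift hmono hwin hant (((t - k : ℕ)) : ZMod n)
      (by rwa [ZMod.val_cast_of_lt (by omega)])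
    have he : (((t - k : ℕ)) : ZMod n) + (k : ZMod n) = ((t : ℕ) : ZMod n) := by
      conv_rhs => rw [show t = (t - k) + k from by omega]
      push_cast; ring
    rw [he] at this
    unfold gfun
    rw [if_neg (by omega), if_pos ht, show t + k - n = t - k by omega]
    linarith

include hk hn hlift hmono hwin hant in
lemma arc : ∀ (b : ZMod n) (m : ℕ), m ≤ k →
    dist (p b) (p (b + (m : ZMod n))) = gfun θ (b.val + m) - gfun θ b.val := by
  intro b m hm
  have hkn : k < n := by omega
  have htn : b.val < n := ZMod.val_lt b
  have hb : ((b.val : ℕ) : ZMod n) = b := by rw [ZMod.natCast_val, ZMod.cast_id]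
  have e1 : p b = ((gfun θ b.val : ℝ) : AddCircle (1:ℝ)) := by
    rw [pg hk hn p θ hlift hmono hwin hant b.val (by omega), hb]
  have e2 : p (b + (m : ZMod n)) = ((gfun θ (b.val + m) : ℝ) : AddCircle (1:ℝ)) := by
    rw [pg hk hn p θ hlift hmono hwin hant (b.val + m) (by omega)]
    congr 1
    push_cast [hb]
    rfl
  have hle : gfun θ b.val ≤ gfun θ (b.val + m) :=
    gmono_le θ hmono hwin _ _ (by omega) (by omega)
  have hhalf : gfun θ (b.val + m) - gfun θ b.val ≤ 1/2 := by
    have h1 := ghalf hk hn p θ hlift hmono hwin hant b.val htn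
    have h2 : gfun θ (b.val + m) ≤ gfun θ (b.val + k) :=
      gmono_le θ hmono hwin _ _ (by omega) (by omega)
    linarith
  rw [e1, e2, distAC (by linarith) hhalf]

include hk hn hlift hmono hwin hant in
lemma mainmono : ∀ b c : ZMod n, 0 < (c - b).val → (c - b).val ≤ k →
    dist (p b) (p (c - 1)) < dist (p b) (p c) ∧
    dist (p (b + 1)) (p c) ≤ dist (p b) (p c) := by
  intro b c hm0 hmk
  set m := (c - b).val with hmdef
  have hkn : k < n := by omega
  have htn : b.val < n := ZMod.val_lt b
  have hc : c = b + (m : ZMod n) := by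
    rw [hmdef, ZMod.natCast_val, ZMod.cast_id]; ring
  have hc1 : c - 1 = b + (((m - 1 : ℕ)) : ZMod n) := by
    rw [hc, Nat.cast_sub hm0]; push_cast; ring
  have d1 : dist (p b) (p c) = gfun θ (b.val + m) - gfun θ b.val := by
    rw [hc]; exact arc hk hn p θ hlift hmono hwin hant b m hmk
  have d2 : dist (p b) (p (c - 1)) = gfun θ (b.val + (m - 1)) - gfun θ b.val := by
    rw [hc1]; exact arc hk hn p θ hlift hmono hwin hant b (m - 1) (by omega)
  constructor
  · rw [d1, d2]
    have := gmono θ hmono hwin (b.val + (m - 1)) (b.val + m) (by omega) (by omega)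
    linarith
  · have hc2 : c = (b + 1) + (((m - 1 : ℕ)) : ZMod n) := by
      rw [hc, Nat.cast_sub hm0]; push_cast; ring
    have d3 : dist (p (b + 1)) (p c) = gfun θ ((b+1).val + (m - 1)) - gfun θ (b+1).val := by
      rw [hc2]; exact arc hk hn p θ hlift hmono hwin hant (b + 1) (m - 1) (by omega)
    have hb : ((b.val : ℕ) : ZMod n) = b := by rw [ZMod.natCast_val, ZMod.cast_id]
    rcases lt_or_ge (b.val + 1) n with hb1 | hb1
    · have hv : (b + 1).val = b.val + 1 := by
        have e : b + 1 = (((b.val + 1 : ℕ)) : ZMod n) := by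
          conv_lhs => rw [← hb]
          push_cast; ring
        rw [e, ZMod.val_cast_of_lt hb1]
      rw [d1, d3, hv, show b.val + 1 + (m - 1) = b.val + m from by omega]
      have := gmono θ hmono hwin b.val (b.val + 1) (by omega) (by omega)
      linarith
    · have hbv : b.val = n - 1 := by omega
      have hv : (b + 1).val = 0 := by
        have e : b + 1 = 0 := by
          rw [← hb, hbv, show (((n-1:ℕ)):ZMod n) + 1 = (((n-1+1 : ℕ)) : ZMod n) from by
            push_cast; ring, show n-1+1 = n from by omega, ZMod.natCast_self]
        rw [e, ZMod.val_zero]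
      rw [d1, d3, hv, hbv, Nat.zero_add]
      have h4 : gfun θ ((n-1) + m) = gfun θ (m-1) + 1 := by
        rw [show (n-1) + m = (m-1) + n from by omega, gshift θ (m-1) (by omega)]
      have h5 : gfun θ (n-1) < θ 0 + 1 := by
        unfold gfun; rw [if_pos (by omega)]; exact hwin _
      have h6 : gfun θ 0 = θ 0 := by
        unfold gfun; rw [if_pos (by omega)]; norm_num
      linarith

end aux2

lemma val_neg_add {n k : ℕ} [NeZero n] (hk : 0 < k) (hn : n = 2 * k) (x : ZMod n)
    (t : ℕ) (hx : ((t : ℕ) : ZMod n) = x) (ht : t + k ≤ n) :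
    (-(x + (k : ZMod n))).val = n - (t + k) := by
  have e : -(x + (k : ZMod n)) = (((n - (t + k) : ℕ)) : ZMod n) := by
    rw [Nat.cast_sub ht, ZMod.natCast_self, Nat.cast_add, hx]; ring
  rw [e, ZMod.val_cast_of_lt (by omega)]

/-- Let `n = 2k` and let `p 1, …, p n` be points of `S¹ = ℝ/ℤ` (circumference 1,
geodesic metric) listed in clockwise cyclic order (witnessed by lifts `θ`), with
`p (i+k)` antipodal to `p i`.  Then `M a := a + k` witnesses that the induced metric
`d a b = dist (p a) (p b)` is monotone:
(1) `a ⪯ b ≺ c ⪯ M(a)` implies `d(b,c-1) < d(b,c)` and `d(b+1,c) ≤ d(b,c)`;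
(2) `M(a) ≺ b ≺ c ⪯ a` implies `d(b,c-1) < d(b,c)` and `d(b+1,c) ≤ d(b,c)`;
(3) `a ≺ b ⪯ M(a)` implies `M(b) ⪯ a ≺ b`, and `M(b) ≺ a ≺ b` implies
    `a ≺ b ⪯ M(a)`; moreover `M(a) ≠ a`. -/
theorem stmt19 {n k : ℕ} [NeZero n] (hk : 0 < k) (hn : n = 2 * k)
    (p : ZMod n → AddCircle (1 : ℝ)) (θ : ZMod n → ℝ)
    (hlift : ∀ i : ZMod n, p i = (θ i : AddCircle (1 : ℝ)))
    (hmono : ∀ i j : ZMod n, i.val < j.val → θ i < θ j)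
    (hwin : ∀ i : ZMod n, θ i < θ 0 + 1)
    (hant : ∀ i : ZMod n, dist (p i) (p (i + (k : ZMod n))) = 1 / 2) :
    (∀ a : ZMod n, a + (k : ZMod n) ≠ a) ∧
    (∀ a b c : ZMod n, cpos a b < cpos a c → cpos a c ≤ cpos a (a + (k : ZMod n)) →
      dist (p b) (p (c - 1)) < dist (p b) (p c) ∧
      dist (p (b + 1)) (p c) ≤ dist (p b) (p c)) ∧
    (∀ a b c : ZMod n, 0 < cpos (a + (k : ZMod n)) b →
      cpos (a + (k : ZMod n)) b < cpos (a + (k : ZMod n)) c →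
      cpos (a + (k : ZMod n)) c ≤ cpos (a + (k : ZMod n)) a →
      dist (p b) (p (c - 1)) < dist (p b) (p c) ∧
      dist (p (b + 1)) (p c) ≤ dist (p b) (p c)) ∧
    (∀ a b : ZMod n, btwSW a b (a + (k : ZMod n)) → btwWS (b + (k : ZMod n)) a b) ∧
    (∀ a b : ZMod n, btwSS (b + (k : ZMod n)) a b → btwSW a b (a + (k : ZMod n))) := by

  have hkn : k < n := by omega
  have valk : (k : ZMod n).val = k := ZMod.val_cast_of_lt hkn
  have hckey : ∀ a : ZMod n, cpos a (a + (k : ZMod n)) = k := by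
    intro a; unfold cpos; rw [add_sub_cancel_left, valk]
  have cposa : ∀ a : ZMod n, cpos (a + (k : ZMod n)) a = k := by
    intro a
    unfold cpos
    rw [show a - (a + (k : ZMod n)) = -((0 : ZMod n) + (k : ZMod n)) from by ring,
      val_neg_add hk hn 0 0 (by norm_num) (by omega)]
    omega
  have hx : ∀ x : ZMod n, ((x.val : ℕ) : ZMod n) = x := fun x => by
    rw [ZMod.natCast_val, ZMod.cast_id]
  have cdiff : ∀ a b c : ZMod n, cpos a b ≤ cpos a c → (c - b).val = cpos a c - cpos a b := by
    intro a b c h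
    unfold cpos at *
    rw [show c - b = (c - a) - (b - a) from by ring, ZMod.val_sub h]
  refine ⟨?_, ?_, ?_, ?_, ?_⟩
  · intro a h
    have h2 : (k : ZMod n) = 0 := by rwa [add_eq_left] at h
    have h3 := congrArg ZMod.val h2
    rw [valk, ZMod.val_zero] at h3
    omega
  · intro a b c h1 h2
    rw [hckey] at h2
    have hd := cdiff a b c h1.le
    exact mainmono hk hn p θ hlift hmono hwin hant b c (by omega) (by omega)
  · intro a b c h1 h2 h3
    rw [cposa] at h3
    have hd := cdiff (a + (k : ZMod n)) b c h2.le
    exact mainmono hk hn p θ hlift hmono hwin hant b c (by omega) (by omega)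
  · intro a b h
    unfold btwSW at h
    obtain ⟨h1, h2⟩ := h
    rw [hckey] at h2
    unfold btwWS
    rw [cposa b]
    unfold cpos at h1 h2 ⊢
    rw [show a - (b + (k : ZMod n)) = -((b - a) + (k : ZMod n)) from by ring,
      val_neg_add hk hn (b - a) (b - a).val (hx _) (by omega)]
    omega
  · intro a b h
    unfold btwSS at h
    obtain ⟨h1, h2⟩ := h
    rw [cposa b] at h2
    unfold btwSW
    rw [hckey]
    unfold cpos at h1 h2 ⊢
    rw [show b - a = -((a - (b + (k : ZMod n))) + (k : ZMod n)) from by ring,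
      val_neg_add hk hn _ (a - (b + (k : ZMod n))).val (hx _) (by omega)]
    omega
end
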